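/- arXiv:1910.13600 — 2 statements merged into one kernel-verified Lean document; each statement's English description precedes it below -/
import Mathlib

section
/- For every α > 0 there exists a constant c_α > 0 such that for all t > 0 and all ξ, η ∈ ℝ³, ∫₀ᵗ (1 + |ξ + ρη|²)^{α/2} dρ ≥ c_α · t · (1 + |ξ|² + t²|η|²)^{α/2}. -/
/-!
Write `ξ + ρ • η = p + (ρ - ρ₀) • η` with `p ⟂ η`, so that by Pythagoras
`‖ξ + ρ • η‖² = ‖p‖² + (ρ - ρ₀)² ‖η‖²` and `‖ξ‖² = ‖p‖² + ρ₀² ‖η‖²`. One of the two quarters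
`[0, t/4]`, `[3t/4, t]` of `[0, t]` stays at distance `≥ t/4` from `ρ₀`; there
`|ρ₀| ≤ ρ + |ρ - ρ₀| ≤ 5 |ρ - ρ₀|` and `t ≤ 4 |ρ - ρ₀|`, hence
`‖ξ‖² + t² ‖η‖² ≤ 41 ‖ξ + ρ • η‖²`. Integrating over that quarter gives the bound with
`c_α = 41^(-α/2) / 4`.
-/

open MeasureTheory Set

theorem sq_add_sq_le_of_le_abs_sub {t ρ ρ₀ : ℝ} (h0 : 0 ≤ ρ) (ht : ρ ≤ t)
    (h : t / 4 ≤ |ρ - ρ₀|) : ρ₀ ^ 2 + t ^ 2 ≤ 41 * (ρ - ρ₀) ^ 2 := by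
  have hρ₀_le : |ρ₀| ≤ 5 * |ρ - ρ₀| := by
    calc |ρ₀| ≤ |ρ| + |ρ - ρ₀| := by simpa using abs_sub ρ (ρ - ρ₀)
      _ ≤ 5 * |ρ - ρ₀| := by rw [abs_of_nonneg h0]; linarith
  have ht_le : |t| ≤ 4 * |ρ - ρ₀| := by rw [abs_of_nonneg (h0.trans ht)]; linarith
  rw [← sq_abs ρ₀, ← sq_abs t, ← sq_abs (ρ - ρ₀)]
  nlinarith [abs_nonneg ρ₀, abs_nonneg t]

theorem exists_Icc_forall_le_abs_sub {t : ℝ} (ht : 0 ≤ t) (ρ₀ : ℝ) :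
    ∃ a, 0 ≤ a ∧ a + t / 4 ≤ t ∧ ∀ ρ ∈ Icc a (a + t / 4), t / 4 ≤ |ρ - ρ₀| := by
  rcases le_or_gt ρ₀ (t / 2) with h | h
  · exact ⟨3 * t / 4, by positivity, by linarith, fun ρ hρ =>
      le_abs.2 (Or.inl (by linarith [hρ.1]))⟩
  · exact ⟨0, le_rfl, by linarith, fun ρ hρ => le_abs.2 (Or.inr (by linarith [hρ.2]))⟩

theorem intervalIntegral.mul_sub_le_integral_of_le_on {f : ℝ → ℝ} {a b c d C : ℝ}
    (hca : c ≤ a) (hab : a ≤ b) (hbd : b ≤ d) (hf : IntervalIntegrable f volume c d)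
    (hf₀ : ∀ x ∈ Ioc c d, 0 ≤ f x) (hC : ∀ x ∈ Icc a b, C ≤ f x) :
    C * (b - a) ≤ ∫ x in c..d, f x :=
  calc C * (b - a) = ∫ _ in a..b, C := by rw [integral_const, smul_eq_mul, mul_comm]
    _ ≤ ∫ x in a..b, f x := integral_mono_on hab intervalIntegrable_const
        (hf.mono_set (by
          rw [uIcc_of_le hab, uIcc_of_le (hca.trans (hab.trans hbd))]
          exact Icc_subset_Icc hca hbd)) hC
    _ ≤ ∫ x in c..d, f x := integral_mono_interval hca hab hbd
        ((ae_restrict_iff' measurableSet_Ioc).2 (ae_of_all _ hf₀)) hf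

section InnerProductSpace

variable {E : Type*} [NormedAddCommGroup E] [InnerProductSpace ℝ E]

theorem exists_inner_eq_zero_add_smul_eq (ξ η : E) :
    ∃ (p : E) (ρ₀ : ℝ), inner ℝ p η = 0 ∧ ∀ ρ : ℝ, ξ + ρ • η = p + (ρ - ρ₀) • η := by
  refine ⟨ξ - (inner ℝ ξ η / ‖η‖ ^ 2) • η, -(inner ℝ ξ η / ‖η‖ ^ 2), ?_, fun ρ => ?_⟩
  · rw [inner_sub_left, real_inner_smul_left, real_inner_self_eq_norm_sq]
    rcases eq_or_ne η 0 with rfl | hη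
    · simp
    · field_simp
      ring
  · rw [sub_neg_eq_add, add_smul, sub_add_add_cancel]

theorem norm_add_smul_sq_of_inner_eq_zero {p η : E} (h : inner ℝ p η = 0) (s : ℝ) :
    ‖p + s • η‖ ^ 2 = ‖p‖ ^ 2 + s ^ 2 * ‖η‖ ^ 2 := by
  rw [norm_add_sq_real, real_inner_smul_right, h, norm_smul, mul_pow, Real.norm_eq_abs, sq_abs]
  ring

theorem exists_Icc_norm_sq_le_norm_add_smul_sq (ξ η : E) {t : ℝ} (ht : 0 ≤ t) :
    ∃ a, 0 ≤ a ∧ a + t / 4 ≤ t ∧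
      ∀ ρ ∈ Icc a (a + t / 4), ‖ξ‖ ^ 2 + t ^ 2 * ‖η‖ ^ 2 ≤ 41 * ‖ξ + ρ • η‖ ^ 2 := by
  obtain ⟨p, ρ₀, hp, hline⟩ := exists_inner_eq_zero_add_smul_eq ξ η
  obtain ⟨a, ha, hat, hfar⟩ := exists_Icc_forall_le_abs_sub ht ρ₀
  refine ⟨a, ha, hat, fun ρ hρ => ?_⟩
  have hξ : ‖ξ‖ ^ 2 = ‖p‖ ^ 2 + ρ₀ ^ 2 * ‖η‖ ^ 2 := by
    have h0 := hline 0
    rw [zero_smul, add_zero, zero_sub] at h0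
    rw [h0, norm_add_smul_sq_of_inner_eq_zero hp, neg_sq]
  have hρ₀ := sq_add_sq_le_of_le_abs_sub (ha.trans hρ.1) (hρ.2.trans hat) (hfar ρ hρ)
  rw [hline ρ, norm_add_smul_sq_of_inner_eq_zero hp, hξ]
  nlinarith [mul_le_mul_of_nonneg_right hρ₀ (sq_nonneg ‖η‖), sq_nonneg ‖p‖]

end InnerProductSpace

/-- Ukai inequality (lower bound). -/
theorem ukai_lower (α : ℝ) (hα : 0 < α) :
    ∃ c : ℝ, 0 < c ∧ ∀ (t : ℝ), 0 < t → ∀ ξ η : EuclideanSpace ℝ (Fin 3),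
      c * t * (1 + ‖ξ‖ ^ 2 + t ^ 2 * ‖η‖ ^ 2) ^ (α / 2)
        ≤ ∫ ρ in (0 : ℝ)..t, (1 + ‖ξ + ρ • η‖ ^ 2) ^ (α / 2) := by
  refine ⟨(41 ^ (α / 2))⁻¹ / 4, by positivity, fun t ht ξ η => ?_⟩
  obtain ⟨a, ha, hat, hfar⟩ := exists_Icc_norm_sq_le_norm_add_smul_sq ξ η ht.le
  set M := 1 + ‖ξ‖ ^ 2 + t ^ 2 * ‖η‖ ^ 2
  have hM : 0 ≤ M := by positivity
  calc (41 ^ (α / 2))⁻¹ / 4 * t * M ^ (α / 2) = (M / 41) ^ (α / 2) * (a + t / 4 - a) := by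
        rw [Real.div_rpow hM (by norm_num)]
        ring
    _ ≤ _ := intervalIntegral.mul_sub_le_integral_of_le_on ha (by linarith) hat
        ((by fun_prop (disch := positivity) : Continuous _).intervalIntegrable _ _)
        (fun _ _ => by positivity)
        fun ρ hρ => Real.rpow_le_rpow (by positivity) (by linarith [hfar ρ hρ]) (by positivity)
end

section
/- For every α > 0, ∫₀¹ ⟨ξ − τη⟩^α dτ ≥ (1 / (2^{2α+1}(α+1))) · (1 + |ξ|² + |η|²)^{α/2} for all ξ, η ∈ ℝ³, where ⟨ζ⟩ = (1 + |ζ|²)^{1/2}. -/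
/-!
Pointwise `⟨x⟩^α ≥ max(1, |x|^α) ≥ (1 + |x|^α)/2`, so the integral is at least
`(1 + ∫₀¹ |ξ - τη|^α dτ)/2`. With `M = max(|ξ|, |η|)`, the reverse triangle inequality gives
`|ξ - τη| ≥ M |τ - c|` on `[0, 1]`, where `c = 1` if `|η| ≤ |ξ|` and `c = |ξ|/|η|` otherwise, and
`∫₀¹ |τ - c|^α dτ = (c^(α+1) + (1-c)^(α+1))/(α+1) ≥ 2^(-α)/(α+1)` by convexity of `t^(α+1)`.
On the other side `(1 + |ξ|² + |η|²)^(α/2) ≤ (2 max(1, M))^α ≤ 2^α (1 + M^α)`.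
-/

open intervalIntegral Set

section

variable {α : ℝ}

lemma one_add_rpow_div_two_le_one_add_sq_rpow {x : ℝ} (hα : 0 ≤ α) (hx : 0 ≤ x) :
    (1 + x ^ α) / 2 ≤ (1 + x ^ 2) ^ (α / 2) := by
  have hone : 1 ≤ (1 + x ^ 2) ^ (α / 2) := Real.one_le_rpow (by nlinarith) (by positivity)
  have hpow : x ^ α ≤ (1 + x ^ 2) ^ (α / 2) := by
    calc x ^ α = (x ^ 2) ^ (α / 2) := by
          rw [← Real.rpow_natCast, ← Real.rpow_mul hx, Nat.cast_ofNat,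
            mul_div_cancel₀ α two_ne_zero]
      _ ≤ (1 + x ^ 2) ^ (α / 2) := by gcongr; linarith
  linarith

lemma one_add_integral_rpow_div_two_le {f : ℝ → ℝ} (hα : 0 ≤ α) (hf : Continuous f)
    (hf₀ : ∀ τ, 0 ≤ f τ) :
    (1 + ∫ τ in (0 : ℝ)..1, f τ ^ α) / 2 ≤ ∫ τ in (0 : ℝ)..1, (1 + f τ ^ 2) ^ (α / 2) := by
  have hfα : Continuous fun τ => f τ ^ α := hf.rpow_const fun _ => Or.inr hα
  calc (1 + ∫ τ in (0 : ℝ)..1, f τ ^ α) / 2 = ∫ τ in (0 : ℝ)..1, (1 + f τ ^ α) / 2 := by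
        rw [intervalIntegral.integral_div,
          integral_add intervalIntegrable_const (hfα.intervalIntegrable 0 1),
          intervalIntegral.integral_const, sub_zero, one_smul]
    _ ≤ ∫ τ in (0 : ℝ)..1, (1 + f τ ^ 2) ^ (α / 2) := by
      refine integral_mono_on zero_le_one (((hfα.const_add 1).div_const 2).intervalIntegrable 0 1)
        ?_ fun τ _ => one_add_rpow_div_two_le_one_add_sq_rpow hα (hf₀ τ)
      exact Continuous.intervalIntegrable (by fun_prop (disch := positivity)) 0 1

lemma one_add_sq_add_sq_rpow_le {x y : ℝ} (hα : 0 ≤ α) (hx : 0 ≤ x) (hy : 0 ≤ y) :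
    (1 + x ^ 2 + y ^ 2) ^ (α / 2) ≤ 2 ^ α * (1 + max x y ^ α) := by
  set M := max x y
  set N := max 1 M
  have hN₁ : 1 ≤ N := le_max_left _ _
  have hbase : 1 + x ^ 2 + y ^ 2 ≤ (2 * N) ^ 2 := by
    have hxN : x ≤ N := (le_max_left x y).trans (le_max_right _ _)
    have hyN : y ≤ N := (le_max_right x y).trans (le_max_right _ _)
    nlinarith
  have hNα : N ^ α ≤ 1 + M ^ α := by
    rcases le_total M 1 with hM | hM
    · rw [show N = 1 from max_eq_left hM, Real.one_rpow]
      linarith [Real.rpow_nonneg (hx.trans (le_max_left x y)) α]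
    · rw [show N = M from max_eq_right hM]
      linarith
  calc (1 + x ^ 2 + y ^ 2) ^ (α / 2) ≤ ((2 * N) ^ 2) ^ (α / 2) := by gcongr
    _ = 2 ^ α * N ^ α := by
      rw [← Real.rpow_natCast, ← Real.rpow_mul (by positivity),
        Nat.cast_ofNat, mul_div_cancel₀ α two_ne_zero, Real.mul_rpow zero_le_two (by positivity)]
    _ ≤ 2 ^ α * (1 + M ^ α) := by gcongr

lemma integral_abs_sub_rpow {c : ℝ} (hα : 0 ≤ α) (hc₀ : 0 ≤ c) (hc₁ : c ≤ 1) :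
    ∫ τ in (0 : ℝ)..1, |τ - c| ^ α = (c ^ (α + 1) + (1 - c) ^ (α + 1)) / (α + 1) := by
  have hcont : Continuous fun τ : ℝ => |τ - c| ^ α := by fun_prop (disch := exact Or.inr hα)
  have hleft : ∫ τ in (0 : ℝ)..c, |τ - c| ^ α = c ^ (α + 1) / (α + 1) := by
    rw [integral_congr (g := fun τ => (c - τ) ^ α), integral_comp_sub_left (fun x => x ^ α),
      sub_self, sub_zero, integral_rpow (Or.inl (by linarith)), Real.zero_rpow (by linarith),
      sub_zero]
    intro τ hτ
    rw [uIcc_of_le hc₀] at hτ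
    simp only [abs_of_nonpos (sub_nonpos.2 hτ.2), neg_sub]
  have hright : ∫ τ in c..1, |τ - c| ^ α = (1 - c) ^ (α + 1) / (α + 1) := by
    rw [integral_congr (g := fun τ => (τ - c) ^ α), integral_comp_sub_right (fun x => x ^ α),
      sub_self, integral_rpow (Or.inl (by linarith)), Real.zero_rpow (by linarith), sub_zero]
    intro τ hτ
    rw [uIcc_of_le hc₁] at hτ
    simp only [abs_of_nonneg (sub_nonneg.2 hτ.1)]
  rw [← integral_add_adjacent_intervals (hcont.intervalIntegrable 0 c)
    (hcont.intervalIntegrable c 1), hleft, hright, add_div]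

lemma one_le_two_rpow_mul_rpow_add_one_sub_rpow {c : ℝ} (hα : 0 ≤ α) (hc₀ : 0 ≤ c) (hc₁ : c ≤ 1) :
    1 ≤ 2 ^ α * (c ^ (α + 1) + (1 - c) ^ (α + 1)) := by
  lift c to NNReal using hc₀
  have h1c : ((1 - c : NNReal) : ℝ) = 1 - c := NNReal.coe_sub (by exact_mod_cast hc₁)
  have hmean := NNReal.rpow_add_le_mul_rpow_add_rpow c (1 - c) (p := α + 1) (by linarith)
  rw [add_tsub_cancel_of_le (by exact_mod_cast hc₁), NNReal.one_rpow, add_sub_cancel_right]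
    at hmean
  rw [← h1c]
  exact_mod_cast hmean

lemma inv_two_rpow_mul_le_integral_abs_sub_rpow {c : ℝ} (hα : 0 ≤ α) (hc₀ : 0 ≤ c) (hc₁ : c ≤ 1) :
    (2 ^ α * (α + 1))⁻¹ ≤ ∫ τ in (0 : ℝ)..1, |τ - c| ^ α := by
  rw [integral_abs_sub_rpow hα hc₀ hc₁, mul_inv, div_eq_mul_inv]
  gcongr
  rw [inv_le_iff_one_le_mul₀ (by positivity)]
  exact (one_le_two_rpow_mul_rpow_add_one_sub_rpow hα hc₀ hc₁).trans_eq (mul_comm _ _)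

variable {E : Type*} [SeminormedAddCommGroup E] [NormedSpace ℝ E]

lemma exists_mul_abs_sub_le_norm_sub_smul (ξ η : E) :
    ∃ c ∈ Icc (0 : ℝ) 1, ∀ τ ∈ Icc (0 : ℝ) 1, max ‖ξ‖ ‖η‖ * |τ - c| ≤ ‖ξ - τ • η‖ := by
  rcases le_total ‖η‖ ‖ξ‖ with h | h
  · refine ⟨1, right_mem_Icc.2 zero_le_one, fun τ hτ => ?_⟩
    have hτη : ‖τ • η‖ = τ * ‖η‖ := by rw [norm_smul, Real.norm_of_nonneg hτ.1]
    rw [max_eq_left h, abs_of_nonpos (sub_nonpos.2 hτ.2), neg_sub]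
    calc ‖ξ‖ * (1 - τ) ≤ ‖ξ‖ - τ * ‖η‖ := by nlinarith [hτ.1]
      _ ≤ ‖ξ - τ • η‖ := hτη ▸ norm_sub_norm_le ξ (τ • η)
  · refine ⟨‖ξ‖ / ‖η‖, ⟨by positivity, div_le_one_of_le₀ h (norm_nonneg η)⟩, fun τ hτ => ?_⟩
    have hcancel : ‖η‖ * (‖ξ‖ / ‖η‖) = ‖ξ‖ := by
      rcases (norm_nonneg η).eq_or_lt with h0 | h0
      · rw [← h0, zero_mul]; exact (le_antisymm (h0 ▸ h) (norm_nonneg ξ)).symm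
      · exact mul_div_cancel₀ _ h0.ne'
    have hτη : ‖τ • η‖ = ‖η‖ * τ := by rw [norm_smul, Real.norm_of_nonneg hτ.1, mul_comm]
    calc max ‖ξ‖ ‖η‖ * |τ - ‖ξ‖ / ‖η‖| = |‖η‖ * τ - ‖η‖ * (‖ξ‖ / ‖η‖)| := by
          rw [max_eq_right h, ← mul_sub, abs_mul, abs_of_nonneg (norm_nonneg η)]
      _ = |‖τ • η‖ - ‖ξ‖| := by rw [hcancel, hτη]
      _ ≤ ‖ξ - τ • η‖ := (abs_norm_sub_norm_le _ _).trans_eq (norm_sub_rev _ _)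

lemma max_norm_rpow_div_le_integral_norm_sub_smul_rpow (hα : 0 ≤ α) (ξ η : E) :
    max ‖ξ‖ ‖η‖ ^ α / (2 ^ α * (α + 1)) ≤ ∫ τ in (0 : ℝ)..1, ‖ξ - τ • η‖ ^ α := by
  obtain ⟨c, ⟨hc₀, hc₁⟩, hle⟩ := exists_mul_abs_sub_le_norm_sub_smul ξ η
  set M := max ‖ξ‖ ‖η‖
  have hM : 0 ≤ M := (norm_nonneg ξ).trans (le_max_left _ _)
  calc M ^ α / (2 ^ α * (α + 1)) ≤ M ^ α * ∫ τ in (0 : ℝ)..1, |τ - c| ^ α := by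
        rw [div_eq_mul_inv]
        gcongr
        exact inv_two_rpow_mul_le_integral_abs_sub_rpow hα hc₀ hc₁
    _ = ∫ τ in (0 : ℝ)..1, (M * |τ - c|) ^ α := by
        rw [← intervalIntegral.integral_const_mul]
        simp only [Real.mul_rpow hM (abs_nonneg _)]
    _ ≤ ∫ τ in (0 : ℝ)..1, ‖ξ - τ • η‖ ^ α :=
        integral_mono_on zero_le_one
          (Continuous.intervalIntegrable (by fun_prop (disch := exact Or.inr hα)) 0 1)
          (Continuous.intervalIntegrable (by fun_prop (disch := exact Or.inr hα)) 0 1)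
          fun τ hτ => Real.rpow_le_rpow (by positivity) (hle τ hτ) hα

end

/-- Scaled Ukai inequality with explicit constant. -/
theorem ukai_scaled (α : ℝ) (hα : 0 < α) (ξ η : EuclideanSpace ℝ (Fin 3)) :
    (2 ^ (2 * α + 1) * (α + 1))⁻¹ * (1 + ‖ξ‖ ^ 2 + ‖η‖ ^ 2) ^ (α / 2)
      ≤ ∫ τ in (0 : ℝ)..1, (1 + ‖ξ - τ • η‖ ^ 2) ^ (α / 2) := by
  set M := max ‖ξ‖ ‖η‖
  set K : ℝ := 2 ^ α * (α + 1)
  have hK : 1 ≤ K :=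
    one_le_mul_of_one_le_of_one_le (Real.one_le_rpow one_le_two hα.le) (by linarith)
  have hC : (2 : ℝ) ^ (2 * α + 1) * (α + 1) = 2 * 2 ^ α * K := by
    rw [Real.rpow_add two_pos, Real.rpow_one, two_mul, Real.rpow_add two_pos]
    ring
  calc (2 ^ (2 * α + 1) * (α + 1))⁻¹ * (1 + ‖ξ‖ ^ 2 + ‖η‖ ^ 2) ^ (α / 2)
      ≤ (2 ^ (2 * α + 1) * (α + 1))⁻¹ * (2 ^ α * (1 + M ^ α)) := by
        gcongr
        exact one_add_sq_add_sq_rpow_le hα.le (norm_nonneg ξ) (norm_nonneg η)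
    _ = (K⁻¹ + M ^ α / K) / 2 := by
        rw [hC]
        field_simp
    _ ≤ (1 + ∫ τ in (0 : ℝ)..1, ‖ξ - τ • η‖ ^ α) / 2 := by
        gcongr
        · exact inv_le_one_of_one_le₀ hK
        · exact max_norm_rpow_div_le_integral_norm_sub_smul_rpow hα.le ξ η
    _ ≤ ∫ τ in (0 : ℝ)..1, (1 + ‖ξ - τ • η‖ ^ 2) ^ (α / 2) :=
        one_add_integral_rpow_div_two_le hα.le (by fun_prop) fun _ => norm_nonneg _
end
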